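/- Let R be a commutative ring and let 𝔸 = (A_1,…,A_a) and 𝔹 = (B_1,…,B_b) be tuples of elements of R such that A_i = B_j for some indices i and j. Then Σ_{α ∈ P(a,b)} (−1)^{|α̂^t|} s_α(𝔸) · s_{α̂^t}(𝔹) = 0. -/

import Mathlib

open Finset

/-- Complete homogeneous symmetric polynomial `h_k` of a tuple
(sum of all monomials of degree `k`). -/
noncomputable def hh {R : Type*} [CommRing R] {n : ℕ} (A : Fin n → R) (k : ℕ) : R :=
  ∑ c ∈ Finset.Nat.antidiagonalTuple n k, ∏ i, A i ^ c i

/-- Elementary symmetric polynomial `e_k` of a tuple. -/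
noncomputable def ee {R : Type*} [CommRing R] {n : ℕ} (A : Fin n → R) (k : ℕ) : R :=
  ∑ s ∈ Finset.powersetCard k (Finset.univ : Finset (Fin n)), ∏ i ∈ s, A i

/-- `h` with integer index, vanishing for negative index. -/
noncomputable def hZ {R : Type*} [CommRing R] {n : ℕ} (A : Fin n → R) (k : ℤ) : R :=
  if 0 ≤ k then hh A k.toNat else 0

/-- The Schur polynomial of a partition `α` with at most `ℓ` parts, evaluated at a
tuple, defined via the Jacobi–Trudi formula `s_α = det (h_{α_i + j - i})`. -/
noncomputable def schur {R : Type*} [CommRing R] {n ℓ : ℕ} (A : Fin n → R)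
    (α : Fin ℓ → ℕ) : R :=
  Matrix.det (Matrix.of fun i j : Fin ℓ => hZ A ((α i : ℤ) + (j : ℕ) - (i : ℕ)))

/-- `P(a,b)`: partitions with at most `a` parts, each of size at most `b`,
recorded as weakly decreasing functions `Fin a → ℕ` with values `≤ b`. -/
def box (a b : ℕ) : Finset (Fin a → ℕ) :=
  ((Finset.univ : Finset (Fin a → Fin (b + 1))).image fun f i => ((f i : ℕ))).filter
    fun α => ∀ i j : Fin a, i ≤ j → α j ≤ α i

/-- The transpose of a partition with at most `a` parts, recorded with `b` parts:
`(α^t)_j = #{i | α_i > j}` (0-indexed). -/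
def tr {a : ℕ} (b : ℕ) (α : Fin a → ℕ) : Fin b → ℕ :=
  fun j => (Finset.univ.filter fun i : Fin a => (j : ℕ) < α i).card

/-- The complement `α̂` of a partition `α ∈ P(a,b)` inside the `a × b` box:
`α̂_{a+1-j} = b - α_j`. -/
def boxCompl {a : ℕ} (b : ℕ) (α : Fin a → ℕ) : Fin a → ℕ :=
  fun i => b - α i.rev

/-- `α̂^t ∈ P(b,a)`: the transpose of the complement of `α ∈ P(a,b)`. -/
def compTr (a b : ℕ) (α : Fin a → ℕ) : Fin b → ℕ :=
  tr b (boxCompl b α)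

/-- The number of boxes `|α|` of a partition. -/
def wt {a : ℕ} (α : Fin a → ℕ) : ℕ := ∑ i, α i

/-!
Stack the rows `(h_{c-i}(𝔸))_{c < a+b}` for `i < a` and `(h_{c-j}(𝔹))_{c < a+b}` for `j < b`
into a square matrix `D`. Laplace expansion along the first `a` rows writes `det D` as a sum over
the `a`-subsets of columns. The `a`-subset `{α_{a-1-m} + m}` of `α ∈ P(a,b)` has complement
`{α̂^t_{b-1-m} + m}`, the two minors are `s_α(𝔸)` and `s_{α̂^t}(𝔹)`, and the shuffle sign is
`(-1)^{|α|} = (-1)^{ab + |α̂^t|}`; so the sum in question is `± det D`.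

If `A_{i₀} = B_{j₀}`, then `P = ∏_{i ≠ i₀} (1 - A_i t) ∏_j (1 - B_j t)` satisfies
`H_𝔸 P = ∏_{j ≠ j₀} (1 - B_j t)` and `H_𝔹 P = ∏_{i ≠ i₀} (1 - A_i t)`, polynomials of degree
`< b` and `< a`, where `H_𝕏 = ∑ₖ hₖ(𝕏) tᵏ`. Hence the reversed coefficient vector of `P`, whose
last entry is `1`, lies in the kernel of `D`, and `det D = 0`.
-/

open PowerSeries

section GeneratingSeries

variable {R : Type*} [CommRing R]

theorem PowerSeries.mk_pow_mul_one_sub_C_mul_X (x : R) : mk (x ^ ·) * (1 - C x * X) = 1 := by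
  simpa [rescale_mk, rescale_X] using congrArg (rescale x) (mk_one_mul_one_sub_eq_one R)

noncomputable def hSeries {n : ℕ} (A : Fin n → R) : R⟦X⟧ := mk (hh A)

theorem hSeries_eq_prod {n : ℕ} (A : Fin n → R) : hSeries A = ∏ i, mk (A i ^ ·) := by
  ext d
  rw [coeff_prod, hSeries, coeff_mk, hh]
  refine sum_nbij' (fun c => Finsupp.equivFunOnFinite.symm c) (⇑) ?_ ?_ ?_ ?_ ?_
  · intro c hc
    simpa [mem_finsuppAntidiag] using Finset.Nat.mem_antidiagonalTuple.mp hc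
  · intro l hl
    simpa [Finset.Nat.mem_antidiagonalTuple, Finsupp.sum_fintype] using
      (mem_finsuppAntidiag.mp hl).1
  · intro c _; simp
  · intro l _; simp
  · intro c _; simp

theorem hSeries_mul_prod_one_sub {n : ℕ} (A : Fin n → R) :
    hSeries A * ∏ i, (1 - C (A i) * X) = 1 := by
  rw [hSeries_eq_prod, ← prod_mul_distrib]
  simp [mk_pow_mul_one_sub_C_mul_X]

theorem coeff_prod_one_sub_C_mul_X_of_card_lt {ι : Type*} (s : Finset ι) (x : ι → R) {d : ℕ}
    (hd : s.card < d) : coeff d (∏ i ∈ s, (1 - C (x i) * X)) = 0 := by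
  classical
  induction s using Finset.induction_on generalizing d with
  | empty => simp [coeff_one, Nat.pos_iff_ne_zero.mp (by simpa using hd)]
  | insert i s hi ih =>
    obtain ⟨d, rfl⟩ := Nat.exists_eq_add_of_lt (Nat.zero_lt_of_lt hd)
    rw [card_insert_of_notMem hi] at hd
    rw [prod_insert hi, sub_mul, one_mul, map_sub, mul_assoc, coeff_C_mul,
      zero_add, coeff_succ_X_mul, ih (by omega), ih (by omega), mul_zero, sub_zero]

theorem sum_hZ_sub_mul_coeff {n N : ℕ} (x : Fin n → R) (P : R⟦X⟧) {d : ℕ} (hd : d < N) :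
    ∑ c : Fin N, hZ x ((c : ℕ) - (d : ℤ)) * coeff (N - 1 - c) P
      = coeff (N - 1 - d) (hSeries x * P) := by
  obtain ⟨e, rfl⟩ : ∃ e, N = d + (e + 1) := ⟨N - d - 1, by omega⟩
  have hlow : ∀ c ∈ range d,
      hZ x ((c : ℕ) - (d : ℤ)) * coeff (d + (e + 1) - 1 - c) P = 0 := by
    intro c hc
    simp [hZ, (by simpa using hc : c < d)]
  rw [Fin.sum_univ_eq_sum_range (fun c => hZ x ((c : ℕ) - (d : ℤ)) * coeff (d + (e + 1) - 1 - c) P),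
    coeff_mul, Finset.Nat.sum_antidiagonal_eq_sum_range_succ_mk, sum_range_add,
    sum_eq_zero hlow, zero_add, (by omega : d + (e + 1) - 1 - d = e)]
  refine sum_congr rfl fun k hk => ?_
  rw [mem_range] at hk
  simp [hZ, hSeries, Nat.add_sub_add_left]

end GeneratingSeries

section Vanishing

variable {R : Type*} [CommRing R] {a b : ℕ}

noncomputable def stackedHMatrix (A : Fin a → R) (B : Fin b → R) :
    Matrix (Fin a ⊕ Fin b) (Fin (a + b)) R :=
  Matrix.of fun r c => Sum.elim (fun i : Fin a => hZ A ((c : ℕ) - (i : ℤ)))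
    (fun j : Fin b => hZ B ((c : ℕ) - (j : ℤ))) r

theorem det_stackedHMatrix_eq_zero (A : Fin a → R) (B : Fin b → R)
    (h : ∃ (i : Fin a) (j : Fin b), A i = B j) :
    ((stackedHMatrix A B).submatrix id finSumFinEquiv).det = 0 := by
  obtain ⟨i₀, j₀, hij⟩ := h
  set P : R⟦X⟧ := (∏ i ∈ univ.erase i₀, (1 - C (A i) * X)) * ∏ j, (1 - C (B j) * X) with hP
  have hA : hSeries A * P = ∏ j ∈ univ.erase j₀, (1 - C (B j) * X) := calc
    hSeries A * P = (∏ j ∈ univ.erase j₀, (1 - C (B j) * X)) *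
        (hSeries A * ∏ i, (1 - C (A i) * X)) := by
      rw [hP, ← prod_erase_mul univ (fun j => 1 - C (B j) * X) (mem_univ j₀),
        ← prod_erase_mul univ (fun i => 1 - C (A i) * X) (mem_univ i₀), hij]
      ring
    _ = _ := by rw [hSeries_mul_prod_one_sub, mul_one]
  have hB : hSeries B * P = ∏ i ∈ univ.erase i₀, (1 - C (A i) * X) := by
    rw [mul_comm, mul_assoc, mul_comm _ (hSeries B), hSeries_mul_prod_one_sub, mul_one]
  have ha := i₀.pos
  have hb := j₀.pos
  let v : Fin (a + b) → R := fun c => coeff (a + b - 1 - c) P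
  refine Matrix.det_eq_zero_of_mulVec_eq_zero_of_mem_nonZeroDivisors (v := v ∘ finSumFinEquiv)
    (i := finSumFinEquiv.symm ⟨a + b - 1, by omega⟩) ?_ (by simp [v, P, one_mem])
  funext r
  change ∑ c, stackedHMatrix A B r (finSumFinEquiv c) * v (finSumFinEquiv c) = 0
  rw [finSumFinEquiv.sum_comp (fun c => stackedHMatrix A B r c * v c)]
  rcases r with ⟨i, hi⟩ | ⟨j, hj⟩
  · have := sum_hZ_sub_mul_coeff A P (by omega : (i : ℕ) < a + b)
    rw [hA, coeff_prod_one_sub_C_mul_X_of_card_lt _ _ (by simp; omega)] at this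
    exact this
  · have := sum_hZ_sub_mul_coeff B P (by omega : (j : ℕ) < a + b)
    rw [hB, coeff_prod_one_sub_C_mul_X_of_card_lt _ _ (by simp; omega)] at this
    exact this

end Vanishing

section ShuffleSign

open Equiv

theorem Fin.apply_add_sub_le_of_strictMono {k : ℕ} {f : Fin k → ℕ} (hf : StrictMono f)
    {i j : Fin k} (hij : i ≤ j) : f i + (j - i) ≤ f j := by
  obtain ⟨n, hn⟩ : ∃ n, (j : ℕ) = i + n := ⟨j - i, by rw [Fin.le_def] at hij; omega⟩
  induction n generalizing j with
  | zero => rw [show j = i from Fin.ext (by omega)]; simp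
  | succ n ih =>
    have hlt : (i : ℕ) + n < k := by omega
    have h₁ := ih (j := ⟨i + n, hlt⟩) (Fin.le_def.mpr (by simp)) rfl
    have h₂ := hf (show (⟨i + n, hlt⟩ : Fin k) < j from Fin.lt_def.mpr (by simp; omega))
    simp only at h₁
    omega

theorem StrictMono.swap_comp {α β : Type*} [Preorder α] [LinearOrder β] {f : α → β}
    (hf : StrictMono f) {x y : β} (hxy : x ⋖ y) (h : x ∉ Set.range f ∨ y ∉ Set.range f) :
    StrictMono (swap x y ∘ f) := by
  intro u v huv
  have hlt := hf huv
  have h₁ : f u < y → f u ≤ x := hxy.le_of_lt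
  have h₂ : x < f v → y ≤ f v := hxy.ge_of_gt
  have := hxy.lt
  simp only [Set.mem_range, not_exists] at h
  simp only [Function.comp_apply, swap_apply_def]
  split_ifs <;> grind

variable {a b : ℕ}

theorem eq_finSumFinEquiv_of_strictMono (π : Fin a ⊕ Fin b ≃ Fin (a + b))
    (hl : StrictMono (π ∘ Sum.inl)) (hr : StrictMono (π ∘ Sum.inr))
    (h : ∀ m, (π (.inl m) : ℕ) ≤ m) : π = finSumFinEquiv := by
  have gap {k : ℕ} {f : Fin k → Fin (a + b)} (hf : StrictMono f) {i j : Fin k} (hij : i ≤ j) :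
      (f i : ℕ) + (j - i) ≤ f j :=
    Fin.apply_add_sub_le_of_strictMono (Fin.val_strictMono.comp hf) hij
  have hinl (m : Fin a) : π (.inl m) = Fin.castAdd b m := by
    have h₁ := gap hl (i := ⟨0, m.pos⟩) (j := m) (Fin.le_def.mpr (Nat.zero_le _))
    have h₂ := h m
    ext
    simp only [Function.comp_apply, Fin.val_castAdd] at h₁ h₂ ⊢
    omega
  have hge (m : Fin b) : a ≤ (π (.inr m) : ℕ) := by
    by_contra! h
    exact Sum.inl_ne_inr (π.injective ((hinl ⟨_, h⟩).trans (Fin.ext rfl)))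
  have hinr (m : Fin b) : π (.inr m) = Fin.natAdd a m := by
    have hm := m.isLt
    have h₁ := gap hr (i := ⟨0, m.pos⟩) (j := m) (Fin.le_def.mpr (Nat.zero_le _))
    have h₂ := gap hr (i := m) (j := ⟨b - 1, by omega⟩) (Fin.le_def.mpr (by simp; omega))
    have h₃ := hge ⟨0, m.pos⟩
    have h₄ := (π (.inr ⟨b - 1, by omega⟩)).isLt
    ext
    simp only [Function.comp_apply, Fin.val_natAdd] at h₁ h₂ ⊢
    omega
  exact Equiv.ext (by rintro (m | m) <;> simp [hinl, hinr])

theorem exists_covBy_notMem_range_inl (π : Fin a ⊕ Fin b ≃ Fin (a + b))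
    (hl : StrictMono (π ∘ Sum.inl)) {m : Fin a} (hm : (m : ℕ) < π (.inl m)) :
    ∃ (m₀ : Fin a) (t : Fin (a + b)), (m₀ : ℕ) < π (.inl m₀) ∧ t ⋖ π (.inl m₀) ∧
      t ∉ Set.range (π ∘ Sum.inl) := by
  obtain ⟨m₀, hm₀, hmin⟩ :=
    exists_min_image (univ.filter fun m : Fin a => (m : ℕ) < π (.inl m)) id ⟨m, by simp [hm]⟩
  have hs : (m₀ : ℕ) < π (.inl m₀) := (mem_filter.mp hm₀).2
  refine ⟨m₀, ⟨π (.inl m₀) - 1, by omega⟩, hs,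
    Fin.covBy_iff.mpr (Nat.covBy_iff_add_one_eq.mpr (by simp; omega)), ?_⟩
  rintro ⟨m, hmt⟩
  have hlt : m < m₀ := hl.lt_iff_lt.mp (hmt.trans_lt (Fin.lt_def.mpr (by simp; omega)))
  have hle : (π (.inl m) : ℕ) ≤ m := not_lt.mp fun h => (hmin m (by simp [h])).not_gt hlt
  have hmt' : (π (.inl m) : ℕ) = π (.inl m₀) - 1 := congrArg Fin.val hmt
  rw [Fin.lt_def] at hlt
  omega

theorem sign_trans_finSumFinEquiv_symm (π : Fin a ⊕ Fin b ≃ Fin (a + b))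
    (hl : StrictMono (π ∘ Sum.inl)) (hr : StrictMono (π ∘ Sum.inr)) :
    Perm.sign (π.trans finSumFinEquiv.symm) = (-1) ^ ∑ m : Fin a, ((π (.inl m) : ℕ) - m) := by
  generalize hd : ∑ m : Fin a, ((π (.inl m) : ℕ) - m) = d
  induction d generalizing π with
  | zero =>
    have h (m : Fin a) : (π (.inl m) : ℕ) ≤ m :=
      Nat.le_of_sub_eq_zero (sum_eq_zero_iff.mp hd m (mem_univ m))
    simp [eq_finSumFinEquiv_of_strictMono π hl hr h]
  | succ d ih =>
    obtain ⟨m, hm⟩ : ∃ m : Fin a, (m : ℕ) < π (.inl m) := by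
      by_contra! hne
      rw [sum_eq_zero fun m _ => Nat.sub_eq_zero_of_le (hne m)] at hd
      omega
    obtain ⟨m₀, t, hs, hts, ht⟩ := exists_covBy_notMem_range_inl π hl hm
    set s := π (.inl m₀)
    have hs' : s ∉ Set.range (π ∘ Sum.inr) := fun ⟨j, hj⟩ => Sum.inr_ne_inl (π.injective hj)
    -- the adjacent transposition of `t` and `s = t + 1` keeps both halves increasing and
    -- lowers the exponent by one
    set π' := π.trans (swap t s)
    have hπ' (m : Fin a) (hm : m ≠ m₀) : π' (.inl m) = π (.inl m) :=
      swap_apply_of_ne_of_ne (fun h => ht ⟨m, h⟩) fun h => hm (Sum.inl_injective (π.injective h))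
    have hd' : ∑ m : Fin a, ((π' (.inl m) : ℕ) - m) = d := by
      have hts' : (t : ℕ) + 1 = s := Nat.covBy_iff_add_one_eq.mp (Fin.covBy_iff.mp hts)
      rw [← add_sum_erase _ _ (mem_univ m₀)] at hd ⊢
      rw [sum_congr rfl fun m hm => by rw [hπ' m (ne_of_mem_erase hm)],
        show π' (.inl m₀) = t from swap_apply_right t s]
      omega
    have hπ : π = π'.trans (swap t s) := by ext x; simp [π']
    rw [hπ, trans_assoc, Perm.sign_trans_trans, Perm.sign_swap hts.ne, ih π'
      (hl.swap_comp hts (.inl ht)) (hr.swap_comp hts (.inr hs')) hd', pow_succ, mul_comm]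

end ShuffleSign

section Laplace

open Equiv Set.powersetCard

variable {a b : ℕ}

abbrev powersetCardCompl : Set.powersetCard (Fin (a + b)) a ≃ Set.powersetCard (Fin (a + b)) b :=
  compl (by simp [add_comm])

noncomputable def shuffle (S : Set.powersetCard (Fin (a + b)) a) : Fin a ⊕ Fin b ≃ Fin (a + b) :=
  .ofBijective (Sum.elim (ofFinEmbEquiv.symm S) (ofFinEmbEquiv.symm (powersetCardCompl S))) <| by
    refine (Fintype.bijective_iff_injective_and_card _).mpr ⟨?_, by simp⟩
    refine (ofFinEmbEquiv.symm S).injective.sumElim (ofFinEmbEquiv.symm _).injective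
      fun i j h => ?_
    have hi := (mem_range_ofFinEmbEquiv_symm_iff_mem S _).mp ⟨i, rfl⟩
    have hj := (mem_range_ofFinEmbEquiv_symm_iff_mem (powersetCardCompl S) _).mp ⟨j, rfl⟩
    rw [← h, powersetCardCompl, Set.powersetCard.mem_compl] at hj
    exact hj hi

theorem mem_iff_exists_shuffle_inl {S : Set.powersetCard (Fin (a + b)) a} {x : Fin (a + b)} :
    x ∈ S ↔ ∃ i, shuffle S (.inl i) = x :=
  (mem_range_ofFinEmbEquiv_symm_iff_mem S x).symm

theorem strictMono_shuffle_inl (S : Set.powersetCard (Fin (a + b)) a) :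
    StrictMono (shuffle S ∘ Sum.inl) :=
  (ofFinEmbEquiv.symm S).strictMono

theorem strictMono_shuffle_inr (S : Set.powersetCard (Fin (a + b)) a) :
    StrictMono (shuffle S ∘ Sum.inr) :=
  (ofFinEmbEquiv.symm (powersetCardCompl S)).strictMono

theorem card_powersetCard_prod_perm_prod_perm :
    Fintype.card (Set.powersetCard (Fin (a + b)) a × Perm (Fin a) × Perm (Fin b))
      = Fintype.card (Perm (Fin a ⊕ Fin b)) := by
  have := Set.powersetCard.card (α := Fin (a + b)) (n := a)
  simp only [Nat.card_eq_fintype_card, Fintype.card_fin] at this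
  simp only [Fintype.card_prod, Fintype.card_perm, Fintype.card_sum, Fintype.card_fin, this,
    ← mul_assoc]
  simpa using Nat.choose_mul_factorial_mul_factorial (Nat.le_add_right a b)

theorem bijective_shuffle_sumCongr : Function.Bijective fun x :
    Set.powersetCard (Fin (a + b)) a × Perm (Fin a) × Perm (Fin b) =>
      (sumCongr x.2.1 x.2.2).trans ((shuffle x.1).trans finSumFinEquiv.symm) := by
  refine (Fintype.bijective_iff_injective_and_card _).mpr
    ⟨?_, card_powersetCard_prod_perm_prod_perm⟩
  rintro ⟨S, σ, τ⟩ ⟨S', σ', τ'⟩ h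
  have h' : ∀ r, shuffle S (sumCongr σ τ r) = shuffle S' (sumCongr σ' τ' r) := fun r => by
    simpa using congrArg finSumFinEquiv (congrFun (congrArg DFunLike.coe h) r)
  have hl (i : Fin a) : shuffle S (.inl (σ i)) = shuffle S' (.inl (σ' i)) := h' (.inl i)
  obtain rfl : S = S' := SetLike.ext fun x => by
    simp only [mem_iff_exists_shuffle_inl]
    constructor
    · rintro ⟨i, rfl⟩
      exact ⟨σ' (σ.symm i), by rw [← hl, apply_symm_apply]⟩
    · rintro ⟨i, rfl⟩
      exact ⟨σ (σ'.symm i), by rw [hl, apply_symm_apply]⟩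
  have : sumCongr σ τ = sumCongr σ' τ' := Equiv.ext fun r => (shuffle S).injective (h' r)
  obtain ⟨rfl, rfl⟩ := Prod.ext_iff.mp (@Perm.sumCongrHom_injective _ _ (σ, τ) (σ', τ') this)
  rfl

variable {R : Type*} [CommRing R]

theorem det_submatrix_finSumFinEquiv_eq_sum_shuffle (M : Matrix (Fin a ⊕ Fin b) (Fin (a + b)) R) :
    (M.submatrix id finSumFinEquiv).det = ∑ S : Set.powersetCard (Fin (a + b)) a,
      (Perm.sign ((shuffle S).trans finSumFinEquiv.symm) : R) *
        ((M.submatrix Sum.inl (shuffle S ∘ Sum.inl)).det *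
          (M.submatrix Sum.inr (shuffle S ∘ Sum.inr)).det) := calc
  _ = ∑ π : Perm (Fin a ⊕ Fin b), (Perm.sign π : R) * ∏ r, M r (finSumFinEquiv (π r)) := by
    rw [← Matrix.det_transpose, Matrix.det_apply']
    rfl
  _ = ∑ x : Set.powersetCard (Fin (a + b)) a × Perm (Fin a) × Perm (Fin b),
      (Perm.sign ((sumCongr x.2.1 x.2.2).trans ((shuffle x.1).trans finSumFinEquiv.symm)) : R) *
        ∏ r, M r (shuffle x.1 (sumCongr x.2.1 x.2.2 r)) :=
    (Fintype.sum_bijective _ bijective_shuffle_sumCongr _ _ fun _ => by simp).symm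
  _ = _ := by
    simp only [Fintype.sum_prod_type]
    refine sum_congr rfl fun S _ => ?_
    rw [← Matrix.det_transpose, Matrix.det_apply', ← Matrix.det_transpose (M.submatrix Sum.inr _),
      Matrix.det_apply', sum_mul_sum, mul_sum]
    refine sum_congr rfl fun σ _ => ?_
    rw [mul_sum]
    refine sum_congr rfl fun τ _ => ?_
    rw [Fintype.prod_sum_type, Perm.sign_trans, Perm.sign_sumCongr]
    simp only [sumCongr_apply, Sum.map_inl, Sum.map_inr, Matrix.transpose_apply,
      Matrix.submatrix_apply, Function.comp_apply, Units.val_mul, Int.cast_mul]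
    ring

end Laplace

section Partitions

open Equiv Set.powersetCard

variable {a b : ℕ}

theorem mem_box_iff {α : Fin a → ℕ} : α ∈ box a b ↔ (∀ i, α i ≤ b) ∧ Antitone α := by
  simp only [_root_.box, mem_filter, mem_image, mem_univ, true_and]
  refine and_congr_left fun _ => ⟨?_, fun h => ⟨fun i => ⟨α i, Nat.lt_succ_of_le (h i)⟩, rfl⟩⟩
  rintro ⟨f, rfl⟩ i
  exact Nat.le_of_lt_succ (f i).isLt

def shifted {ℓ : ℕ} (β : Fin ℓ → ℕ) (m : Fin ℓ) : ℕ := β m.rev + m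

theorem strictMono_shifted {ℓ : ℕ} {β : Fin ℓ → ℕ} (hβ : Antitone β) : StrictMono (shifted β) := by
  intro m m' h
  have := hβ (Fin.rev_le_rev.mpr h.le)
  simp only [shifted]
  omega

theorem det_hZ_shifted_sub {R : Type*} [CommRing R] {n ℓ : ℕ} (x : Fin n → R) (β : Fin ℓ → ℕ) :
    (Matrix.of fun i m : Fin ℓ => hZ x ((shifted β m : ℕ) - (i : ℤ))).det = schur x β := by
  rw [schur, ← Matrix.det_submatrix_equiv_self Fin.revPerm, ← Matrix.det_transpose]
  congr 1
  ext i m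
  simp only [shifted, Matrix.transpose_apply, Matrix.submatrix_apply, Matrix.of_apply,
    Fin.revPerm_apply, Fin.val_rev, Fin.rev_rev]
  congr 1
  omega

theorem compTr_rev (α : Fin a → ℕ) (m : Fin b) :
    compTr a b α m.rev = #{i | α i ≤ m} := by
  rw [compTr, tr]
  refine card_nbij' Fin.rev Fin.rev (fun i hi => ?_) (fun i hi => ?_) (fun _ _ => Fin.rev_rev _)
    (fun _ _ => Fin.rev_rev _)
  all_goals
    have := m.isLt
    rw [mem_coe, mem_filter] at hi ⊢
    simp only [mem_univ, true_and, boxCompl, Fin.rev_rev, Fin.val_rev] at hi ⊢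
    omega

theorem wt_tr {α : Fin a → ℕ} (hα : ∀ i, α i ≤ b) : wt (tr b α) = wt α := by
  simp only [wt, tr, card_filter]
  rw [sum_comm]
  refine sum_congr rfl fun i _ => ?_
  rw [← card_filter, Fin.card_filter_val_lt, min_eq_right (hα i)]

theorem wt_compTr_add_wt {α : Fin a → ℕ} (hα : ∀ i, α i ≤ b) :
    wt (compTr a b α) + wt α = a * b := by
  rw [← wt_tr hα, wt, ← Equiv.sum_comp Fin.revPerm, wt, ← sum_add_distrib]
  simp only [Fin.revPerm_apply, compTr_rev, tr]
  rw [sum_congr rfl fun m _ => ?_, sum_const, card_univ, Fintype.card_fin, smul_eq_mul, mul_comm]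
  simpa only [not_le, card_univ, Fintype.card_fin] using
    card_filter_add_card_filter_not (s := univ) fun i => α i ≤ m

theorem antitone_tr (β : Fin a → ℕ) : Antitone (tr b β) := by
  intro j j' h
  refine card_le_card fun i => ?_
  simp only [mem_filter, mem_univ, true_and]
  exact (Fin.le_def.mp h).trans_lt

theorem tr_le (β : Fin a → ℕ) (j : Fin b) : tr b β j ≤ a :=
  (card_filter_le _ _).trans (card_univ.trans (Fintype.card_fin a)).le

def shiftedEmb {ℓ N : ℕ} (β : Fin ℓ → ℕ) (hβ : Antitone β) (hN : ∀ i, β i + ℓ ≤ N) :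
    Fin ℓ ↪o Fin N :=
  OrderEmbedding.ofStrictMono (fun m => ⟨shifted β m, by have := hN m.rev; simp [shifted]; omega⟩)
    (strictMono_shifted hβ)

@[simp]
theorem val_shiftedEmb {ℓ N : ℕ} (β : Fin ℓ → ℕ) (hβ : Antitone β) (hN : ∀ i, β i + ℓ ≤ N)
    (m : Fin ℓ) : (shiftedEmb β hβ hN m : ℕ) = shifted β m :=
  rfl

theorem sub_rev_mem_box (f : Fin a ↪o Fin (a + b)) :
    (fun i => (f i.rev : ℕ) - i.rev) ∈ box a b := by
  have gap {i j : Fin a} (h : i ≤ j) := Fin.apply_add_sub_le_of_strictMono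
    (Fin.val_strictMono.comp f.strictMono) h
  refine mem_box_iff.mpr ⟨fun i => ?_, fun i j h => ?_⟩
  · have hi := i.isLt
    have h₁ := gap (i := i.rev) (j := ⟨a - 1, by omega⟩) (Fin.le_def.mpr (by simp; omega))
    have h₂ := (f ⟨a - 1, by omega⟩).isLt
    simp only [Function.comp_apply, Fin.val_rev] at h₁ h₂ ⊢
    omega
  · have h₁ := gap (Fin.rev_le_rev.mpr h)
    have h₂ := gap (i := ⟨0, j.pos⟩) (j := j.rev) (Fin.le_def.mpr (by simp))
    simp only [Function.comp_apply, Fin.val_rev] at h₁ h₂ ⊢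
    omega

def boxEquivOrderEmbedding : box a b ≃ (Fin a ↪o Fin (a + b)) where
  toFun α := shiftedEmb α.1 (mem_box_iff.mp α.2).2 fun i => by
    have := (mem_box_iff.mp α.2).1 i; omega
  invFun f := ⟨_, sub_rev_mem_box f⟩
  left_inv α := Subtype.ext (funext fun i => by simp [shifted])
  right_inv f := by
    ext m
    have := Fin.apply_add_sub_le_of_strictMono (Fin.val_strictMono.comp f.strictMono)
      (i := ⟨0, m.pos⟩) (j := m) (Fin.le_def.mpr (by simp))
    simp only [Function.comp_apply] at this
    simp [shifted]
    omega

theorem shifted_ne_shifted_compTr {α : Fin a → ℕ} (hα : Antitone α) (m : Fin a) (m' : Fin b) :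
    shifted α m ≠ shifted (compTr a b α) m' := by
  rw [shifted, shifted, compTr_rev]
  by_cases h : α m.rev ≤ m'
  · have : #(Ici m.rev) ≤ #{i | α i ≤ m'} :=
      card_le_card fun i hi => by simpa using (hα (mem_Ici.mp hi)).trans h
    rw [Fin.card_Ici, Fin.val_rev] at this
    omega
  · have : #{i | α i ≤ m'} ≤ #(Ioi m.rev) := card_le_card fun i hi => by
      simp only [mem_filter, mem_univ, true_and] at hi
      exact mem_Ioi.mpr (lt_of_not_ge fun hle => h ((hα hle).trans hi))
    rw [Fin.card_Ioi, Fin.val_rev] at this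
    omega

def compTrEmb (α : Fin a → ℕ) : Fin b ↪o Fin (a + b) :=
  shiftedEmb (compTr a b α) (antitone_tr _) fun j => by
    have : compTr a b α j ≤ a := tr_le _ j
    omega

theorem ofFinEmbEquiv_symm_powersetCardCompl_boxEquivOrderEmbedding (α : box a b) :
    ofFinEmbEquiv.symm (powersetCardCompl (ofFinEmbEquiv (boxEquivOrderEmbedding α)))
      = compTrEmb α.1 := by
  rw [Equiv.symm_apply_eq]
  refine (eq_iff_subset.mpr fun x hx => ?_).symm
  rw [mem_coe_iff, mem_ofFinEmbEquiv_iff_mem_range] at hx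
  obtain ⟨m', rfl⟩ := hx
  rw [mem_coe_iff, powersetCardCompl, Set.powersetCard.mem_compl, mem_ofFinEmbEquiv_iff_mem_range]
  rintro ⟨m, hm⟩
  exact shifted_ne_shifted_compTr (mem_box_iff.mp α.2).2 m m' (congrArg Fin.val hm)

theorem det_stackedHMatrix_eq_sum {R : Type*} [CommRing R] (A : Fin a → R) (B : Fin b → R) :
    ((stackedHMatrix A B).submatrix id finSumFinEquiv).det
      = ∑ α ∈ box a b, (-1) ^ wt α * schur A α * schur B (compTr a b α) := by
  rw [det_submatrix_finSumFinEquiv_eq_sum_shuffle,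
    ← (boxEquivOrderEmbedding.trans ofFinEmbEquiv).sum_comp, ← sum_coe_sort (box a b)]
  refine sum_congr rfl fun α _ => ?_
  set S := (boxEquivOrderEmbedding.trans ofFinEmbEquiv) α
  have hl (m : Fin a) : (shuffle S (.inl m) : ℕ) = shifted α.1 m := by
    simp [shuffle, S, boxEquivOrderEmbedding]
  have hr (m : Fin b) : (shuffle S (.inr m) : ℕ) = shifted (compTr a b α.1) m := by
    simp [shuffle, S, ofFinEmbEquiv_symm_powersetCardCompl_boxEquivOrderEmbedding, compTrEmb]
    rfl
  have hsign : (Perm.sign ((shuffle S).trans finSumFinEquiv.symm) : R) = (-1) ^ wt α.1 := by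
    rw [sign_trans_finSumFinEquiv_symm _ (strictMono_shuffle_inl S) (strictMono_shuffle_inr S)]
    simp only [hl, shifted, Nat.add_sub_cancel]
    rw [show ∑ m : Fin a, α.1 m.rev = wt α.1 from Equiv.sum_comp Fin.revPerm α.1]
    push_cast
    rfl
  have hA : (stackedHMatrix A B).submatrix Sum.inl (shuffle S ∘ Sum.inl)
      = Matrix.of fun (i m : Fin a) => hZ A ((shifted α.1 m : ℕ) - (i : ℕ)) := by
    ext i m
    simp [stackedHMatrix, hl]
  have hB : (stackedHMatrix A B).submatrix Sum.inr (shuffle S ∘ Sum.inr)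
      = Matrix.of fun (j m : Fin b) => hZ B ((shifted (compTr a b α.1) m : ℕ) - (j : ℕ)) := by
    ext j m
    simp [stackedHMatrix, hr]
  rw [hsign, hA, hB, det_hZ_shifted_sub, det_hZ_shifted_sub, mul_assoc]

end Partitions

/-- if `A_i = B_j` for some `i, j`, then
`Σ_{α ∈ P(a,b)} (−1)^{|α̂^t|} s_α(𝔸) · s_{α̂^t}(𝔹) = 0`. -/
theorem statement2 {R : Type*} [CommRing R] {a b : ℕ} (A : Fin a → R) (B : Fin b → R)
    (h : ∃ (i : Fin a) (j : Fin b), A i = B j) :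
    ∑ α ∈ box a b,
        (-1 : R) ^ wt (compTr a b α) * schur A α * schur B (compTr a b α) = 0 := by
  have hsq (n : ℕ) : (-1 : R) ^ n * (-1) ^ n = 1 := by rw [← pow_add, Even.neg_one_pow ⟨n, rfl⟩]
  calc _ = (-1) ^ (a * b) * ∑ α ∈ box a b, (-1) ^ wt α * schur A α * schur B (compTr a b α) := by
        rw [mul_sum]
        refine sum_congr rfl fun α hα => ?_
        rw [← wt_compTr_add_wt (mem_box_iff.mp hα).1, pow_add]
        linear_combination -(-1 : R) ^ wt (compTr a b α) * schur A α * schur B (compTr a b α) *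
          hsq (wt α)
    _ = 0 := by rw [← det_stackedHMatrix_eq_sum, det_stackedHMatrix_eq_zero A B h, mul_zero]
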